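/- Let Φ: G → H be a right-resolving graph homomorphism between finite graphs. Then Φ is synchronizing (i.e., each fiber (∂Φ)⁻¹(I) is a single ∼_Φ class) if and only if for every state I of H there exists a path u in H starting at I such that the set (∂Φ)⁻¹(I)·u has exactly one element. -/

import Mathlib

/-- A finite directed multigraph. -/
structure FinGraph where
  V : Type
  E : Type
  [fintV : Fintype V]
  [fintE : Fintype E]
  [decV : DecidableEq V]
  [decE : DecidableEq E]
  src : E → V
  tgt : E → V

attribute [instance] FinGraph.fintV FinGraph.fintE FinGraph.decV FinGraph.decE

/-- A graph homomorphism. -/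
structure GHom (G H : FinGraph) where
  eMap : G.E → H.E
  vMap : G.V → H.V
  src_eq : ∀ e, H.src (eMap e) = vMap (G.src e)
  tgt_eq : ∀ e, H.tgt (eMap e) = vMap (G.tgt e)

def GHom.comp {G K H : FinGraph} (Δ : GHom K H) (Ψ : GHom G K) : GHom G H where
  eMap := Δ.eMap ∘ Ψ.eMap
  vMap := Δ.vMap ∘ Ψ.vMap
  src_eq := fun e => by
    simp only [Function.comp_apply, Δ.src_eq, Ψ.src_eq]
  tgt_eq := fun e => by
    simp only [Function.comp_apply, Δ.tgt_eq, Ψ.tgt_eq]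

/-- The restriction of a homomorphism to the outgoing edges of a state. -/
def outMap {G H : FinGraph} (Φ : GHom G H) (I : G.V) :
    {e : G.E // G.src e = I} → {f : H.E // H.src f = Φ.vMap I} :=
  fun e => ⟨Φ.eMap e.1, (Φ.src_eq e.1).trans (congrArg Φ.vMap e.2)⟩

/-- A right-resolver: a surjective homomorphism restricting to a bijection
on the outgoing edges of each state. -/
def IsRR {G H : FinGraph} (Φ : GHom G H) : Prop :=
  Function.Surjective Φ.vMap ∧ ∀ I : G.V, Function.Bijective (outMap Φ I)

/-- `IsPathFrom H I u`: the edge list `u` is a path in `H` starting at `I`. -/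
def IsPathFrom (H : FinGraph) : H.V → List H.E → Prop
  | _, [] => True
  | I, e :: u => H.src e = I ∧ IsPathFrom H (H.tgt e) u

/-- The terminal state of a path starting at `I`. -/
def pathEnd (H : FinGraph) (I : H.V) (u : List H.E) : H.V :=
  u.foldl (fun _ e => H.tgt e) I

/-- One-step transition: `I · a` is the target of the unique edge at `I`
lifting `a` (when `Φ` is right-resolving and `a` starts at the image of `I`). -/
noncomputable def step {G H : FinGraph} (Φ : GHom G H) (I : G.V) (a : H.E) : G.V :=
  if h : ∃ e : G.E, G.src e = I ∧ Φ.eMap e = a then G.tgt h.choose else I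

/-- Transition along a word: `I · u`. -/
noncomputable def transPath {G H : FinGraph} (Φ : GHom G H) (I : G.V) (u : List H.E) : G.V :=
  u.foldl (step Φ) I

/-- The stability relation of a right-resolver. -/
def Stable {G H : FinGraph} (Φ : GHom G H) (I₁ I₂ : G.V) : Prop :=
  Φ.vMap I₁ = Φ.vMap I₂ ∧
  ∀ u : List H.E, IsPathFrom H (Φ.vMap I₁) u →
    ∃ v : List H.E, IsPathFrom H (pathEnd H (Φ.vMap I₁) u) v ∧
      transPath Φ I₁ (u ++ v) = transPath Φ I₂ (u ++ v)

/-- A right-resolver is synchronizing if each fiber of its state map is a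
single stability class. -/
def Synchronizing {G H : FinGraph} (Φ : GHom G H) : Prop :=
  ∀ I₁ I₂ : G.V, Φ.vMap I₁ = Φ.vMap I₂ → Stable Φ I₁ I₂

/-- The fiber of the state map over a state of the codomain. -/
def fiber {G H : FinGraph} (Φ : GHom G H) (I : H.V) : Set G.V := {J | Φ.vMap J = I}

/-- The image `U · u` of a set of states under transition along a word. -/
noncomputable def setTrans {G H : FinGraph} (Φ : GHom G H) (U : Set G.V)
    (u : List H.E) : Set G.V :=
  (fun J => transPath Φ J u) '' U

/-- A minimal image of a right-resolver. -/
def IsMinImage {G H : FinGraph} (Φ : GHom G H) (U : Set G.V) : Prop :=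
  ∃ (I : H.V) (u : List H.E), IsPathFrom H I u ∧ U = setTrans Φ (fiber Φ I) u ∧
    ∀ v : List H.E, IsPathFrom H (pathEnd H I u) v →
      (setTrans Φ U v).ncard = U.ncard

/-- Strong connectedness: a directed path between every ordered pair of states. -/
def StronglyConnected (G : FinGraph) : Prop :=
  ∀ I J : G.V, ∃ u : List G.E, IsPathFrom G I u ∧ pathEnd G I u = J

/-!
If every fiber is a single stability class, merge the states of a fiber one at a time into a
fixed anchor, each time extending the word built so far; the final word collapses the whole fiber.
Conversely, after any path `u` the states `J₁·u` and `J₂·u` lie in a common fiber, and a word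
collapsing that fiber merges them.
-/

section Transitions

variable {G H : FinGraph} (Φ : GHom G H)

lemma transPath_append (J : G.V) (u v : List H.E) :
    transPath Φ J (u ++ v) = transPath Φ (transPath Φ J u) v :=
  List.foldl_append

lemma isPathFrom_append {I : H.V} {u v : List H.E}
    (hu : IsPathFrom H I u) (hv : IsPathFrom H (pathEnd H I u) v) :
    IsPathFrom H I (u ++ v) := by
  induction u generalizing I with
  | nil => exact hv
  | cons e u ih => exact ⟨hu.1, ih hu.2 hv⟩

lemma step_vMap (hΦ : IsRR Φ) {J : G.V} {a : H.E} (ha : H.src a = Φ.vMap J) :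
    Φ.vMap (step Φ J a) = H.tgt a := by
  obtain ⟨e, he⟩ := (hΦ.2 J).2 ⟨a, ha⟩
  have hlift : ∃ e : G.E, G.src e = J ∧ Φ.eMap e = a := ⟨e.1, e.2, congrArg Subtype.val he⟩
  rw [step, dif_pos hlift, ← Φ.tgt_eq, hlift.choose_spec.2]

lemma transPath_vMap (hΦ : IsRR Φ) {J : G.V} {u : List H.E}
    (hu : IsPathFrom H (Φ.vMap J) u) :
    Φ.vMap (transPath Φ J u) = pathEnd H (Φ.vMap J) u := by
  induction u generalizing J with
  | nil => rfl
  | cons a u ih =>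
    have hstep := step_vMap Φ hΦ hu.1
    exact (ih (hstep ▸ hu.2)).trans (congrArg (pathEnd H · u) hstep)

lemma exists_word_merging_of_stable (J₀ : G.V) (S : Finset G.V)
    (hS : ∀ J ∈ S, Stable Φ J J₀) :
    ∃ u : List H.E, IsPathFrom H (Φ.vMap J₀) u ∧
      ∀ J ∈ S, transPath Φ J u = transPath Φ J₀ u := by
  induction S using Finset.induction_on with
  | empty => exact ⟨[], trivial, by simp⟩
  | insert J S _ ih =>
    obtain ⟨u, hu, hmerge⟩ := ih fun K hK => hS K (Finset.mem_insert_of_mem hK)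
    obtain ⟨hJ, hcont⟩ := hS J (Finset.mem_insert_self J S)
    obtain ⟨v, hv, hJv⟩ := hcont u (hJ ▸ hu)
    refine ⟨u ++ v, isPathFrom_append hu (hJ ▸ hv), ?_⟩
    intro K hK
    rcases Finset.mem_insert.1 hK with rfl | hK
    · exact hJv
    · rw [transPath_append, hmerge K hK, ← transPath_append]

lemma transPath_eq_of_ncard_setTrans_eq_one {U : Set G.V} {u : List H.E}
    (hU : (setTrans Φ U u).ncard = 1) {J K : G.V} (hJ : J ∈ U) (hK : K ∈ U) :
    transPath Φ J u = transPath Φ K u := by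
  obtain ⟨c, hc⟩ := Set.ncard_eq_one.1 hU
  have hJc : transPath Φ J u ∈ setTrans Φ U u := Set.mem_image_of_mem _ hJ
  have hKc : transPath Φ K u ∈ setTrans Φ U u := Set.mem_image_of_mem _ hK
  rw [hc] at hJc hKc
  exact hJc.trans hKc.symm

end Transitions

/-- a right-resolver is synchronizing iff every fiber can be
collapsed to a single state by some word. -/
theorem synchronizing_iff_collapsible {G H : FinGraph} (Φ : GHom G H) (hΦ : IsRR Φ) :
    Synchronizing Φ ↔
      ∀ I : H.V, ∃ u : List H.E, IsPathFrom H I u ∧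
        (setTrans Φ (fiber Φ I) u).ncard = 1 := by
  constructor
  · intro hsync I
    obtain ⟨J₀, rfl⟩ := hΦ.1 I
    obtain ⟨u, hu, hmerge⟩ := exists_word_merging_of_stable Φ J₀
      (Finset.univ.filter fun J => Φ.vMap J = Φ.vMap J₀)
      fun J hJ => hsync J J₀ (Finset.mem_filter.1 hJ).2
    refine ⟨u, hu, Set.ncard_eq_one.2 ⟨transPath Φ J₀ u, ?_⟩⟩
    refine Set.eq_singleton_iff_unique_mem.2 ⟨⟨J₀, rfl, rfl⟩, ?_⟩
    rintro _ ⟨J, hJ, rfl⟩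
    exact hmerge J (Finset.mem_filter.2 ⟨Finset.mem_univ J, hJ⟩)
  · intro hcollapse J₁ J₂ hfib
    refine ⟨hfib, fun u hu => ?_⟩
    obtain ⟨w, hw, hcard⟩ := hcollapse (pathEnd H (Φ.vMap J₁) u)
    refine ⟨w, hw, ?_⟩
    rw [transPath_append, transPath_append]
    exact transPath_eq_of_ncard_setTrans_eq_one Φ hcard (transPath_vMap Φ hΦ hu)
      (hfib ▸ transPath_vMap Φ hΦ (hfib ▸ hu))
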